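/- Let X be a Binomial(m, p) random variable with m ≥ 1 and p ∈ (0, 1], and let n ≥ 1 be an integer such that log n ≤ 2·m·p. Then P( X/m ≥ p + √(18·p·log n / m) ) ≤ n^{−3}. -/

import Mathlib

/-!
Chernoff's method. For `t ≥ 0`, Markov's inequality applied to `exp (t S)` together with the
Bernoulli moment generating function `1 + p (eᵗ - 1) ≤ exp (p (eᵗ - 1))` bounds
`P(S ≥ (p + ε) m)` by `exp (m (p (eᵗ - 1) - t (p + ε)))`. Choosing `t = ε / (3p)`, which is at
most `2` because `log n ≤ 2 m p`, the quadratic bound `eᵗ ≤ 1 + t + 3t²/2` makes the exponent at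
most `-m ε² / (6p) = -3 log n`.
-/

open MeasureTheory ProbabilityTheory Real

lemma exp_le_one_add_add_three_halves_mul_sq {u : ℝ} (hu : |u| ≤ 2) :
    exp u ≤ 1 + u + 3 / 2 * u ^ 2 := by
  have hhalf : |u / 2| ≤ 1 := by rw [abs_div, abs_two]; linarith
  have hquad := abs_le.mp (abs_exp_sub_one_sub_id_le hhalf)
  have hu' := abs_le.mp hu
  calc exp u = exp (u / 2) ^ 2 := by rw [← exp_nat_mul]; ring_nf
    _ ≤ (1 + u / 2 + (u / 2) ^ 2) ^ 2 := by gcongr; linarith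
    _ ≤ 1 + u + 3 / 2 * u ^ 2 := by
      -- with `v = u / 2`: `(1 + v + v²)² = 1 + 2v + 6v² - v² (1 - v) (3 + v)`
      nlinarith [mul_nonneg (sq_nonneg u) (by linarith : 0 ≤ 2 - u),
        mul_nonneg (sq_nonneg u) (by linarith : 0 ≤ u + 6)]

lemma chernoff_exponent_le {p ε : ℝ} (hp : 0 < p) (hε : |ε| ≤ 6 * p) :
    p * (exp (ε / (3 * p)) - 1) - ε / (3 * p) * (p + ε) ≤ -(ε ^ 2 / (6 * p)) := by
  set t := ε / (3 * p) with ht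
  have hε_eq : ε = 3 * p * t := by rw [ht]; field_simp
  have ht2 : |t| ≤ 2 := by
    rw [ht, abs_div, abs_of_pos (by positivity : 0 < 3 * p), div_le_iff₀ (by positivity)]
    linarith
  have hexp := exp_le_one_add_add_three_halves_mul_sq ht2
  have hrhs : ε ^ 2 / (6 * p) = 3 / 2 * p * t ^ 2 := by rw [hε_eq]; field_simp; ring
  rw [hrhs, hε_eq]
  nlinarith [mul_le_mul_of_nonneg_left hexp hp.le]

section

variable {Ω : Type*}

lemma eq_indicator_of_eq_zero_or_eq_one {Y : Ω → ℝ} (hval : ∀ ω, Y ω = 0 ∨ Y ω = 1) :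
    Y = {ω | Y ω = 1}.indicator 1 := by
  ext ω
  rcases hval ω with h | h <;> simp [h]

lemma exp_mul_eq_of_eq_zero_or_eq_one {Y : Ω → ℝ} (hval : ∀ ω, Y ω = 0 ∨ Y ω = 1) (t : ℝ) :
    (fun ω ↦ exp (t * Y ω)) = fun ω ↦ 1 + (exp t - 1) * Y ω := by
  ext ω
  rcases hval ω with h | h <;> simp [h]

variable [MeasurableSpace Ω] {μ : Measure Ω} {p : ℝ}

section

variable {Y : Ω → ℝ}

lemma integral_eq_of_bernoulli (hY : Measurable Y) (hval : ∀ ω, Y ω = 0 ∨ Y ω = 1)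
    (hp : 0 ≤ p) (hbern : μ {ω | Y ω = 1} = ENNReal.ofReal p) : ∫ ω, Y ω ∂μ = p := by
  have hA : MeasurableSet {ω | Y ω = 1} := hY (measurableSet_singleton 1)
  rw [eq_indicator_of_eq_zero_or_eq_one hval, integral_indicator_one hA, measureReal_def, hbern,
    ENNReal.toReal_ofReal hp]

lemma integrable_of_eq_zero_or_eq_one [IsFiniteMeasure μ] (hY : Measurable Y)
    (hval : ∀ ω, Y ω = 0 ∨ Y ω = 1) : Integrable Y μ := by
  rw [eq_indicator_of_eq_zero_or_eq_one hval]
  exact (integrable_const 1).indicator (hY (measurableSet_singleton 1))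

lemma integrable_exp_mul_of_eq_zero_or_eq_one [IsFiniteMeasure μ] (hY : Measurable Y)
    (hval : ∀ ω, Y ω = 0 ∨ Y ω = 1) (t : ℝ) : Integrable (fun ω ↦ exp (t * Y ω)) μ := by
  rw [exp_mul_eq_of_eq_zero_or_eq_one hval]
  exact (integrable_const 1).add ((integrable_of_eq_zero_or_eq_one hY hval).const_mul _)

lemma mgf_eq_of_bernoulli [IsProbabilityMeasure μ] (hY : Measurable Y)
    (hval : ∀ ω, Y ω = 0 ∨ Y ω = 1) (hp : 0 ≤ p) (hbern : μ {ω | Y ω = 1} = ENNReal.ofReal p)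
    (t : ℝ) : mgf Y μ t = 1 + p * (exp t - 1) := by
  rw [mgf, exp_mul_eq_of_eq_zero_or_eq_one hval,
    integral_add (integrable_const 1) ((integrable_of_eq_zero_or_eq_one hY hval).const_mul _),
    integral_const, integral_const_mul, integral_eq_of_bernoulli hY hval hp hbern]
  simp [mul_comm]

end

variable {ι : Type*} [Fintype ι] {Y : ι → Ω → ℝ}

theorem measure_sum_ge_le_of_bernoulli (hmeas : ∀ i, Measurable (Y i))
    (hval : ∀ i ω, Y i ω = 0 ∨ Y i ω = 1) (hindep : iIndepFun Y μ) (hp : 0 ≤ p)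
    (hbern : ∀ i, μ {ω | Y i ω = 1} = ENNReal.ofReal p) (a : ℝ) {t : ℝ} (ht : 0 ≤ t) :
    μ.real {ω | a ≤ ∑ i, Y i ω} ≤ exp (Fintype.card ι * (p * (exp t - 1)) - t * a) := by
  have := hindep.isProbabilityMeasure
  have hsum : ∀ ω, ∑ i, Y i ω = (∑ i, Y i) ω := fun ω ↦ (Finset.sum_apply ω _ Y).symm
  have hint : Integrable (fun ω ↦ exp (t * (∑ i, Y i) ω)) μ :=
    hindep.integrable_exp_mul_sum hmeas fun i _ ↦
      integrable_exp_mul_of_eq_zero_or_eq_one (hmeas i) (hval i) t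
  have hmgf : mgf (∑ i, Y i) μ t = (1 + p * (exp t - 1)) ^ Fintype.card ι := by
    rw [hindep.mgf_sum hmeas, Finset.prod_congr rfl fun i _ ↦
      mgf_eq_of_bernoulli (hmeas i) (hval i) hp (hbern i) t, Finset.prod_const, Finset.card_univ]
  simp_rw [hsum]
  calc μ.real {ω | a ≤ (∑ i, Y i) ω} ≤ exp (-t * a) * mgf (∑ i, Y i) μ t :=
        measure_ge_le_exp_mul_mgf a ht hint
    _ ≤ exp (-t * a) * exp (p * (exp t - 1)) ^ Fintype.card ι := by
        rw [hmgf]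
        gcongr
        · exact add_nonneg zero_le_one (mul_nonneg hp (sub_nonneg.2 (one_le_exp ht)))
        · linarith [add_one_le_exp (p * (exp t - 1))]
    _ = exp (Fintype.card ι * (p * (exp t - 1)) - t * a) := by
        rw [← exp_nat_mul, ← exp_add]
        ring_nf

theorem measure_sum_ge_le_exp_neg_sq_of_bernoulli (hmeas : ∀ i, Measurable (Y i))
    (hval : ∀ i ω, Y i ω = 0 ∨ Y i ω = 1) (hindep : iIndepFun Y μ) (hp : 0 < p)
    (hbern : ∀ i, μ {ω | Y i ω = 1} = ENNReal.ofReal p) {ε : ℝ} (hε0 : 0 ≤ ε) (hε : ε ≤ 6 * p) :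
    μ.real {ω | (p + ε) * Fintype.card ι ≤ ∑ i, Y i ω} ≤
      exp (-(Fintype.card ι * ε ^ 2 / (6 * p))) := by
  refine (measure_sum_ge_le_of_bernoulli hmeas hval hindep hp.le hbern _
    (by positivity : 0 ≤ ε / (3 * p))).trans (exp_le_exp.mpr ?_)
  have hexp := chernoff_exponent_le hp (by rwa [abs_of_nonneg hε0])
  have hcard : (0 : ℝ) ≤ Fintype.card ι := Nat.cast_nonneg _
  have := mul_le_mul_of_nonneg_left hexp hcard
  linarith [show Fintype.card ι * ε ^ 2 / (6 * p) = Fintype.card ι * (ε ^ 2 / (6 * p)) by ring]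

end

theorem binomial_upper_tail (m n : ℕ) (p : ℝ) (hm : 1 ≤ m) (hn : 1 ≤ n)
    (hp0 : 0 < p) (hlog : Real.log n ≤ 2 * m * p)
    (Ω : Type) (_ : MeasurableSpace Ω) (μ : Measure Ω)
    (Y : Fin m → Ω → ℝ)
    (hmeas : ∀ i, Measurable (Y i))
    (hval : ∀ i ω, Y i ω = 0 ∨ Y i ω = 1)
    (hindep : iIndepFun Y μ)
    (hbern : ∀ i, μ {ω | Y i ω = 1} = ENNReal.ofReal p) :
    μ {ω | p + Real.sqrt (18 * p * Real.log n / m) ≤ (∑ i, Y i ω) / (m : ℝ)}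
      ≤ ((n : ENNReal) ^ 3)⁻¹ := by
  have := hindep.isProbabilityMeasure
  have hm0 : (0 : ℝ) < m := by exact_mod_cast hm
  have hn0 : (0 : ℝ) < n := by exact_mod_cast hn
  set ε := Real.sqrt (18 * p * Real.log n / m)
  have hε2 : ε ^ 2 = 18 * p * Real.log n / m :=
    sq_sqrt (by have := Real.log_natCast_nonneg n; positivity)
  have hε6p : ε ≤ 6 * p := by
    rw [sqrt_le_left (by positivity), div_le_iff₀ hm0]
    nlinarith [mul_le_mul_of_nonneg_left hlog (by positivity : (0 : ℝ) ≤ 18 * p)]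
  have hevent : {ω | p + ε ≤ (∑ i, Y i ω) / (m : ℝ)} =
      {ω | (p + ε) * Fintype.card (Fin m) ≤ ∑ i, Y i ω} := by
    simp only [Fintype.card_fin, le_div_iff₀ hm0]
  have htail := measure_sum_ge_le_exp_neg_sq_of_bernoulli hmeas hval hindep hp0 hbern
    (sqrt_nonneg _) hε6p
  rw [hevent, ← ofReal_measureReal, ← ENNReal.ofReal_natCast, ← ENNReal.ofReal_pow hn0.le,
    ← ENNReal.ofReal_inv_of_pos (by positivity)]
  refine ENNReal.ofReal_le_ofReal (htail.trans_eq ?_)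
  have hexponent : Fintype.card (Fin m) * ε ^ 2 / (6 * p) = log (n ^ 3) := by
    rw [Fintype.card_fin, hε2, log_pow]
    field_simp
    ring
  rw [hexponent, exp_neg, exp_log (by positivity)]
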